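/- arXiv:1112.2406 — 2 statements merged into one kernel-verified Lean document; each statement's English description precedes it below -/
import Mathlib

section
/- A pair (S*, γ*) ∈ [S̲, S̄] × Y is a saddle point of the relaxed utility function Ψ̂, i.e. Ψ̂(S*, γ) ≤ Ψ̂(S*, γ*) ≤ Ψ̂(S, γ*) for all (S, γ) ∈ [S̲, S̄] × Y, if and only if γ* is an optimal solution of the utility maximization problem under transaction costs (Φ(X_T(γ*)) = λ) and S* is a generalized shadow price. -/
open MeasureTheory Filter Set Topology
open scoped ENNReal

noncomputable section

namespace Shadow

variable {Ω : Type*}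

/-- strategy extended by the conventions `γ₋₁ = 0`, `γ_t = 0` for `t ≥ T`. -/
def extStrat (T : ℕ) (γ : ℕ → Ω → ℝ) : ℤ → Ω → ℝ := fun t =>
  if 0 ≤ t ∧ t < (T : ℤ) then γ t.toNat else 0

/-- `Δγ_t = γ_t − γ_{t−1}` with the conventions `γ₋₁ = 0`, `γ_T = 0`. -/
def dGamma (T : ℕ) (γ : ℕ → Ω → ℝ) (t : ℕ) (ω : Ω) : ℝ :=
  extStrat T γ (t : ℤ) ω - extStrat T γ ((t : ℤ) - 1) ω

/-- terminal wealth `X_T(γ)` under transaction costs. -/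
def XT (T : ℕ) (Sl Su : ℕ → Ω → ℝ) (γ : ℕ → Ω → ℝ) (ω : Ω) : ℝ :=
  1 + ∑ t ∈ Finset.range (T + 1),
      (Sl t ω * max (-dGamma T γ t ω) 0 - Su t ω * max (dGamma T γ t ω) 0)

/-- frictionless terminal wealth `1 + (γ ∘ S)_T`. -/
def FW (T : ℕ) (S : ℕ → Ω → ℝ) (γ : ℕ → Ω → ℝ) (ω : Ω) : ℝ :=
  1 + ∑ t ∈ Finset.range T, γ t ω * (S (t + 1) ω - S t ω)

/-- the lower semicontinuous envelope of `f` on `𝒳` with respect to the topology `τ`: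
the largest function which is lsc on `𝒳` and majorized by `f` on `𝒳`. -/
def lscEnvOn {α : Type*} (τ : TopologicalSpace α) (𝒳 : Set α) (f : α → EReal) : α → EReal :=
  fun x => ⨆ g ∈ {g : α → EReal |
      @LowerSemicontinuousOn α EReal τ _ g 𝒳 ∧ ∀ y ∈ 𝒳, g y ≤ f y}, g x

variable [MeasurableSpace Ω]

/-- the weak topology `σ(L^q, L^p)`, pulled back to functions: the coarsest topology making
all pairings with `L^p` test functions continuous. -/
def weakTop (P : Measure Ω) (p : ℝ≥0∞) : TopologicalSpace (Ω → ℝ) :=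
  ⨅ g ∈ {g : Ω → ℝ | MemLp g p P},
    TopologicalSpace.induced (fun S : Ω → ℝ => ∫ ω, S ω * g ω ∂P) inferInstance

/-- product of weak topologies over time, on price processes. -/
def weakTopProc (P : Measure Ω) (p : ℝ≥0∞) : TopologicalSpace (ℕ → Ω → ℝ) :=
  ⨅ t : ℕ, TopologicalSpace.induced (fun S : ℕ → Ω → ℝ => S t) (weakTop P p)

/-- the metric of convergence in probability. -/
def rhoDist (P : Measure Ω) (f g : Ω → ℝ) : ℝ :=
  ∫ ω, |f ω - g ω| / (1 + |f ω - g ω|) ∂P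

/-- topology of convergence in probability. -/
def probTop (P : Measure Ω) : TopologicalSpace (Ω → ℝ) :=
  TopologicalSpace.generateFrom
    {s | ∃ f : Ω → ℝ, ∃ ε : ℝ, 0 < ε ∧ s = {h | rhoDist P f h < ε}}

/-- the product over time of the topologies of convergence in probability. -/
def probTopProc (P : Measure Ω) : TopologicalSpace (ℕ → Ω → ℝ) :=
  ⨅ t : ℕ, TopologicalSpace.induced (fun γ : ℕ → Ω → ℝ => γ t) (probTop P)

/-- the bid–ask interval `[S̲, S̄]` of adapted price processes. -/
def priceInterval (F : ℕ → MeasurableSpace Ω) (P : Measure Ω) (Sl Su : ℕ → Ω → ℝ) :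
    Set (ℕ → Ω → ℝ) :=
  {S | ∀ t, Measurable[F t] (S t) ∧ ∀ᵐ ω ∂P, Sl t ω ≤ S t ω ∧ S t ω ≤ Su t ω}

/-- `Ψ(S, γ) = Φ(1 + (γ∘S)_T)`. -/
def Psi (T : ℕ) (Φ : (Ω → ℝ) → EReal) (S γ : ℕ → Ω → ℝ) : EReal := Φ (FW T S γ)

/-- `Ψ̂(·, γ)`: the `τ^w`-lower semicontinuous envelope of `Ψ(·, γ)` on `[S̲, S̄]`. -/
def PsiHat (P : Measure Ω) (p : ℝ≥0∞) (F : ℕ → MeasurableSpace Ω)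
    (Sl Su : ℕ → Ω → ℝ) (T : ℕ) (Φ : (Ω → ℝ) → EReal) (γ : ℕ → Ω → ℝ) :
    (ℕ → Ω → ℝ) → EReal :=
  lscEnvOn (weakTopProc P p) (priceInterval F P Sl Su) (fun S => Psi T Φ S γ)

end Shadow
open Shadow MeasureTheory
open scoped ENNReal

/-!
For every price process `S` in the bid–ask spread the frictionless wealth `1 + (γ∘S)_T`
dominates the wealth `X_T(γ)` under transaction costs, so the constant `Φ(X_T(γ))` is an lsc
minorant of `Ψ(·, γ)` and hence `Φ(X_T(γ)) ≤ Ψ̂(S, γ)` everywhere. Conversely, at the price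
that equals the ask when `γ` buys and the bid otherwise, both wealths coincide, so
`min_S Ψ̂(S, γ) = Φ(X_T(γ))`. Given these two facts, the saddle-point characterisation is
pure order theory.
-/

section SaddlePoint

variable {ι σ α : Type*} [CompleteLattice α]

theorem saddlePoint_iff_of_forall_le_of_exists_le {Y : Set ι} {X : Set σ} {f : ι → σ → α} {g : ι → α}
    {i₀ : ι} (hi₀ : i₀ ∈ Y) (hg_le : ∀ i ∈ Y, ∀ x, g i ≤ f i x)
    (hg_attained : ∃ x ∈ X, f i₀ x ≤ g i₀) (x₀ : σ) :
    ((∀ i ∈ Y, f i x₀ ≤ f i₀ x₀) ∧ ∀ x ∈ X, f i₀ x₀ ≤ f i₀ x) ↔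
      (g i₀ = ⨆ i ∈ Y, g i ∧ ⨆ i ∈ Y, f i x₀ = ⨆ i ∈ Y, g i) := by
  have hg_le_sup : g i₀ ≤ ⨆ i ∈ Y, g i := le_iSup₂_of_le i₀ hi₀ le_rfl
  have hsup_le : ⨆ i ∈ Y, g i ≤ ⨆ i ∈ Y, f i x₀ :=
    iSup₂_le fun i hi => le_iSup₂_of_le i hi (hg_le i hi x₀)
  constructor
  · rintro ⟨hmax, hmin⟩
    obtain ⟨x', hx', hfx'⟩ := hg_attained
    have hf_le_g : f i₀ x₀ ≤ g i₀ := (hmin x' hx').trans hfx'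
    have hsup_f : ⨆ i ∈ Y, f i x₀ ≤ g i₀ := (iSup₂_le hmax).trans hf_le_g
    exact ⟨le_antisymm hg_le_sup (hsup_le.trans hsup_f),
      le_antisymm (hsup_f.trans hg_le_sup) hsup_le⟩
  · rintro ⟨hopt, hsup⟩
    have hf_le_g : ∀ i ∈ Y, f i x₀ ≤ g i₀ := fun i hi => by
      rw [hopt, ← hsup]; exact le_iSup₂_of_le i hi le_rfl
    exact ⟨fun i hi => (hf_le_g i hi).trans (hg_le i₀ hi₀ x₀),
      fun x _ => (hf_le_g i₀ hi₀).trans (hg_le i₀ hi₀ x)⟩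

end SaddlePoint

namespace Shadow

section Envelope

variable {α : Type*} (τ : TopologicalSpace α) (𝒳 : Set α) (f : α → EReal)

theorem lscEnvOn_le {x : α} (hx : x ∈ 𝒳) : lscEnvOn τ 𝒳 f x ≤ f x :=
  iSup₂_le fun _ hg => hg.2 x hx

theorem le_lscEnvOn_of_forall_le {c : EReal} (hc : ∀ y ∈ 𝒳, c ≤ f y) (x : α) :
    c ≤ lscEnvOn τ 𝒳 f x :=
  le_iSup₂_of_le (fun _ => c) ⟨@lowerSemicontinuousOn_const _ _ τ _ _ _, hc⟩ le_rfl

end Envelope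

section Wealth

variable {Ω : Type*} (T : ℕ) (γ : ℕ → Ω → ℝ)

theorem extStrat_natCast (t : ℕ) (ω : Ω) :
    extStrat T γ t ω = if t < T then γ t ω else 0 := by
  simp [extStrat, apply_ite (fun f : Ω → ℝ => f ω)]

theorem sum_range_dGamma (t : ℕ) (ω : Ω) :
    ∑ j ∈ Finset.range (t + 1), dGamma T γ j ω = extStrat T γ t ω := by
  induction t with
  | zero => simp [dGamma, extStrat]
  | succ t ih =>
    rw [Finset.sum_range_succ, ih, dGamma, Nat.cast_succ, add_sub_cancel_right]
    ring

-- Summation by parts, using `γ_T = 0`.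
theorem FW_eq_one_sub_sum_mul_dGamma (S : ℕ → Ω → ℝ) (ω : Ω) :
    FW T S γ ω = 1 - ∑ t ∈ Finset.range (T + 1), S t ω * dGamma T γ t ω := by
  have hby_parts := Finset.sum_range_by_parts (fun t => S t ω) (fun t => dGamma T γ t ω) (T + 1)
  simp only [smul_eq_mul, Nat.add_sub_cancel, sum_range_dGamma, extStrat_natCast,
    lt_irrefl, if_false, mul_zero, zero_sub] at hby_parts
  rw [hby_parts, FW, sub_neg_eq_add]
  congr 1
  refine Finset.sum_congr rfl fun t ht => ?_
  rw [if_pos (Finset.mem_range.mp ht)]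
  ring

theorem bid_ask_cashflow_le {l s u d : ℝ} (hl : l ≤ s) (hu : s ≤ u) :
    l * max (-d) 0 - u * max d 0 ≤ -(s * d) := by
  have hd : s * d = s * max d 0 - s * max (-d) 0 := by rw [← mul_sub, max_zero_sub_eq_self]
  nlinarith [mul_le_mul_of_nonneg_right hl (le_max_right (-d) 0),
    mul_le_mul_of_nonneg_right hu (le_max_right d 0)]

theorem XT_le_FW (Sl Su S : ℕ → Ω → ℝ) (ω : Ω)
    (hS : ∀ t, Sl t ω ≤ S t ω ∧ S t ω ≤ Su t ω) :
    XT T Sl Su γ ω ≤ FW T S γ ω := by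
  rw [FW_eq_one_sub_sum_mul_dGamma, XT, sub_eq_add_neg, ← Finset.sum_neg_distrib]
  gcongr with t
  exact bid_ask_cashflow_le (hS t).1 (hS t).2

def executionPrice (Sl Su : ℕ → Ω → ℝ) : ℕ → Ω → ℝ :=
  fun t ω => if 0 < dGamma T γ t ω then Su t ω else Sl t ω

theorem FW_executionPrice (Sl Su : ℕ → Ω → ℝ) (ω : Ω) :
    FW T (executionPrice T γ Sl Su) γ ω = XT T Sl Su γ ω := by
  rw [FW_eq_one_sub_sum_mul_dGamma, XT, sub_eq_add_neg, ← Finset.sum_neg_distrib]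
  congr 1
  refine Finset.sum_congr rfl fun t _ => ?_
  rw [executionPrice]
  split_ifs with hd
  · rw [max_eq_left hd.le, max_eq_right (neg_nonpos.mpr hd.le)]; ring
  · rw [max_eq_right (not_lt.mp hd), max_eq_left (neg_nonneg.mpr (not_lt.mp hd))]; ring

variable {F : ℕ → MeasurableSpace Ω}

theorem measurable_extStrat (hF : Monotone F) (hγ : ∀ t, Measurable[F t] (γ t))
    {u : ℤ} {t : ℕ} (hut : u ≤ t) : Measurable[F t] (extStrat T γ u) := by
  unfold extStrat
  split_ifs with hu
  · exact (hγ _).mono (hF (by omega)) le_rfl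
  · exact measurable_const

theorem measurable_dGamma (hF : Monotone F) (hγ : ∀ t, Measurable[F t] (γ t)) (t : ℕ) :
    Measurable[F t] (dGamma T γ t) :=
  (measurable_extStrat T γ hF hγ le_rfl).sub (measurable_extStrat T γ hF hγ (by omega))

theorem executionPrice_mem_priceInterval [MeasurableSpace Ω] (P : Measure Ω) (hF : Monotone F)
    {Sl Su : ℕ → Ω → ℝ} (hSl : ∀ t, Measurable[F t] (Sl t)) (hSu : ∀ t, Measurable[F t] (Su t))
    (hord : ∀ t, ∀ᵐ ω ∂P, Sl t ω ≤ Su t ω) (hγ : ∀ t, Measurable[F t] (γ t)) :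
    executionPrice T γ Sl Su ∈ priceInterval F P Sl Su := fun t =>
  ⟨Measurable.ite (measurableSet_lt measurable_const (measurable_dGamma T γ hF hγ t))
      (hSu t) (hSl t),
    (hord t).mono fun ω hω => by
      unfold executionPrice
      split_ifs
      · exact ⟨hω, le_rfl⟩
      · exact ⟨le_rfl, hω⟩⟩

end Wealth

section RelaxedUtility

variable {Ω : Type*} [MeasurableSpace Ω] (P : Measure Ω) (p : ℝ≥0∞) (F : ℕ → MeasurableSpace Ω)
  (Sl Su : ℕ → Ω → ℝ) (T : ℕ) {Φ : (Ω → ℝ) → EReal} (γ : ℕ → Ω → ℝ)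

theorem Phi_XT_le_PsiHat (hΦ : ∀ X Y : Ω → ℝ, (∀ᵐ ω ∂P, X ω ≤ Y ω) → Φ X ≤ Φ Y)
    (S : ℕ → Ω → ℝ) : Φ (XT T Sl Su γ) ≤ PsiHat P p F Sl Su T Φ γ S := by
  refine le_lscEnvOn_of_forall_le _ _ _ (fun S' hS' => hΦ _ _ ?_) S
  filter_upwards [ae_all_iff.mpr fun t => (hS' t).2] with ω hω
  exact XT_le_FW T γ Sl Su S' ω hω

theorem PsiHat_executionPrice_le (hmem : executionPrice T γ Sl Su ∈ priceInterval F P Sl Su) :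
    PsiHat P p F Sl Su T Φ γ (executionPrice T γ Sl Su) ≤ Φ (XT T Sl Su γ) :=
  (lscEnvOn_le _ _ _ hmem).trans_eq (congrArg Φ (funext (FW_executionPrice T γ Sl Su)))

end RelaxedUtility

end Shadow

theorem statement2_general
    {Ω : Type*} [MeasurableSpace Ω] (P : Measure Ω)
    (T : ℕ) (F : ℕ → MeasurableSpace Ω)
    (hF_mono : Monotone F)
    (p : ℝ≥0∞)
    (Sl Su : ℕ → Ω → ℝ)
    (hSl_meas : ∀ t, Measurable[F t] (Sl t)) (hSu_meas : ∀ t, Measurable[F t] (Su t))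
    (hS_ord : ∀ t, ∀ᵐ ω ∂P, 0 < Sl t ω ∧ Sl t ω ≤ Su t ω)
    (s : ℝ≥0∞)
    (𝒴 : Set (ℕ → Ω → ℝ))
    (h𝒴ad : ∀ γ ∈ 𝒴, ∀ t, Measurable[F t] (γ t) ∧ MemLp (γ t) s P)
    (Φ : (Ω → ℝ) → EReal)
    (hΦmono : ∀ X Y : Ω → ℝ, (∀ᵐ ω ∂P, X ω ≤ Y ω) → Φ X ≤ Φ Y)
    (Sstar : ℕ → Ω → ℝ)
    (γstar : ℕ → Ω → ℝ) (hγstar : γstar ∈ 𝒴) :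
    ((∀ γ ∈ 𝒴, PsiHat P p F Sl Su T Φ γ Sstar ≤ PsiHat P p F Sl Su T Φ γstar Sstar) ∧
      (∀ S ∈ priceInterval F P Sl Su,
        PsiHat P p F Sl Su T Φ γstar Sstar ≤ PsiHat P p F Sl Su T Φ γstar S))
    ↔ (Φ (XT T Sl Su γstar) = (⨆ γ ∈ 𝒴, Φ (XT T Sl Su γ)) ∧
        (⨆ γ ∈ 𝒴, PsiHat P p F Sl Su T Φ γ Sstar) = ⨆ γ ∈ 𝒴, Φ (XT T Sl Su γ)) := by
  have hmem : executionPrice T γstar Sl Su ∈ priceInterval F P Sl Su :=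
    executionPrice_mem_priceInterval T γstar P hF_mono hSl_meas hSu_meas
      (fun t => (hS_ord t).mono fun _ h => h.2) fun t => (h𝒴ad γstar hγstar t).1
  exact saddlePoint_iff_of_forall_le_of_exists_le hγstar
    (fun γ _ => Phi_XT_le_PsiHat P p F Sl Su T γ hΦmono)
    ⟨_, hmem, PsiHat_executionPrice_le P p F Sl Su T γstar hmem⟩ Sstar

/-- **Theorem 3.** `(S⋆, γ⋆)` is a saddle point of the relaxed utility `Ψ̂` iff `γ⋆` is an
optimal solution of the utility maximization problem under transaction costs and `S⋆` is a
generalized shadow price. -/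
theorem statement2
    {Ω : Type*} [MeasurableSpace Ω] (P : Measure Ω) [IsProbabilityMeasure P]
    (T : ℕ) (F : ℕ → MeasurableSpace Ω)
    (hF_mono : Monotone F) (hF_le : ∀ t, F t ≤ ‹MeasurableSpace Ω›)
    (q p : ℝ≥0∞) (hq : 1 ≤ q) (hpq : 1 / p + 1 / q = 1)
    (Sl Su : ℕ → Ω → ℝ)
    (hSl_meas : ∀ t, Measurable[F t] (Sl t)) (hSu_meas : ∀ t, Measurable[F t] (Su t))
    (hS_ord : ∀ t, ∀ᵐ ω ∂P, 0 < Sl t ω ∧ Sl t ω ≤ Su t ω)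
    (hSl_Lq : ∀ t, MemLp (Sl t) q P) (hSu_Lq : ∀ t, MemLp (Su t) q P)
    (s : ℝ≥0∞) (hs : s = 0 ∨ s = ∞)
    (𝒴 : Set (ℕ → Ω → ℝ)) (h𝒴conv : Convex ℝ 𝒴)
    (h𝒴ad : ∀ γ ∈ 𝒴, ∀ t, Measurable[F t] (γ t) ∧ MemLp (γ t) s P)
    (Φ : (Ω → ℝ) → EReal)
    (hΦmono : ∀ X Y : Ω → ℝ, (∀ᵐ ω ∂P, X ω ≤ Y ω) → Φ X ≤ Φ Y)
    (hΦqc : ∀ X Y : Ω → ℝ, ∀ a b : ℝ, 0 ≤ a → 0 ≤ b → a + b = 1 →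
      min (Φ X) (Φ Y) ≤ Φ (fun ω => a * X ω + b * Y ω))
    (Sstar : ℕ → Ω → ℝ) (hSstar : Sstar ∈ priceInterval F P Sl Su)
    (γstar : ℕ → Ω → ℝ) (hγstar : γstar ∈ 𝒴) :
    ((∀ γ ∈ 𝒴, PsiHat P p F Sl Su T Φ γ Sstar ≤ PsiHat P p F Sl Su T Φ γstar Sstar) ∧
      (∀ S ∈ priceInterval F P Sl Su,
        PsiHat P p F Sl Su T Φ γstar Sstar ≤ PsiHat P p F Sl Su T Φ γstar S))
    ↔ (Φ (XT T Sl Su γstar) = (⨆ γ ∈ 𝒴, Φ (XT T Sl Su γ)) ∧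
        (⨆ γ ∈ 𝒴, PsiHat P p F Sl Su T Φ γ Sstar) = ⨆ γ ∈ 𝒴, Φ (XT T Sl Su γ)) :=
  statement2_general P T F hF_mono p Sl Su hSl_meas hSu_meas hS_ord s 𝒴 h𝒴ad Φ hΦmono Sstar γstar
    hγstar
end
end

section
/- In the one-period model of Example 3, assume additionally that U is strictly increasing and differentiable and that an optimal solution γ_0* ∈ ℝ of the problem maximize E[U(X_1(γ))] over γ_0 ∈ ℝ exists. Then a pair (S*, γ*) is a saddle point of the relaxed functional Ψ̂ if and only if (i) S*_1 · 1_{{γ_0* ≠ 0}} = S̲_1 · 1_{{γ_0* > 0}} + S̄_1 · 1_{{γ_0* < 0}}, and (ii) E[(S*_1 − S_0) U′(1 + γ_0*(S*_1 − S_0))] = 0. Consequently, in this model every generalized shadow price is a shadow price: if S* is a generalized shadow price then sup_{γ_0∈ℝ} E[U(1 + γ_0(S*_1 − S_0))] = λ. -/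
open MeasureTheory Filter Set Topology
open scoped ENNReal

noncomputable section

open Shadow MeasureTheory
open scoped ENNReal

noncomputable section

/-- Lebesgue measure on `Ω = [0,1]`. -/
def P15 : MeasureTheory.Measure ℝ := MeasureTheory.volume.restrict (Set.Icc 0 1)

/-- the order interval `[S̲_1, S̄_1] ⊆ L^1`. -/
def I15 (Sl Su : ℝ → ℝ) : Set (ℝ → ℝ) :=
  {f | Measurable f ∧ ∀ᵐ ω ∂P15, Sl ω ≤ f ω ∧ f ω ≤ Su ω}

/-- terminal wealth `X_1(γ) = 1 + γ₀⁺(S̲_1 − S_0) − γ₀⁻(S̄_1 − S_0)`. -/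
def X1ex3 (S0 : ℝ) (Sl Su : ℝ → ℝ) (γ0 : ℝ) (ω : ℝ) : ℝ :=
  1 + max γ0 0 * (Sl ω - S0) - max (-γ0) 0 * (Su ω - S0)

/-- the relaxed utility `Ψ̂(S, γ)` of Example 3, given by its explicit formula. -/
def PsiHat3 (S0 : ℝ) (Sl Su : ℝ → ℝ) (U : ℝ → ℝ) (f : ℝ → ℝ) (γ0 : ℝ) : ℝ :=
  ∫ ω, (U (1 + γ0 * (Su ω - S0)) * ((f ω - Sl ω) / (Su ω - Sl ω)) +
        U (1 + γ0 * (Sl ω - S0)) * ((Su ω - f ω) / (Su ω - Sl ω))) ∂P15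

/-!
Write `w = (S₁ - S̲₁) / (S̄₁ - S̲₁)`, so that the integrand of `Ψ̂(S, γ)` is
`w U(1 + γ (S̄₁ - S₀)) + (1 - w) U(1 + γ (S̲₁ - S₀))`. It is affine in `S₁` and, `U` being
increasing, it is minimal exactly when all the weight sits on the bid where `γ > 0` and on the
ask where `γ < 0`; the minimum is `U(X₁(γ))`. Hence minimality in `S` is condition (i). In `γ`
the integrand is concave and differentiable, so maximality of `γ*` is the first-order condition
`E[∂_γ] = 0`, which under (i) reads (ii).

If `S*` is a generalized shadow price and `γ*` is optimal, then
`E U(X₁(γ*)) ≤ Ψ̂(S*, γ*) ≤ λ = E U(X₁(γ*))`, so `(S*, γ*)` is a saddle point. By (i) the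
frictionless wealth `1 + γ* (S*₁ - S₀)` is `X₁(γ*)`, and by (ii) and the concavity of `U` no
frictionless strategy does better than `γ*`.
-/

open MeasureTheory Filter Set

theorem iSup_eq_of_forall_le {ι α : Type*} [CompleteLattice α] {φ : ι → α} {i₀ : ι}
    (h : ∀ i, φ i ≤ φ i₀) : ⨆ i, φ i = φ i₀ :=
  le_antisymm (iSup_le h) (le_iSup φ i₀)

theorem MeasureTheory.MemLp.exists_ae_abs_le {Ω : Type*} [MeasurableSpace Ω] {μ : Measure Ω}
    {f : Ω → ℝ} (hf : MemLp f ∞ μ) : ∃ C, ∀ᵐ ω ∂μ, |f ω| ≤ C := by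
  have h := hf.2
  rw [eLpNorm_exponent_top] at h
  obtain ⟨C, hC⟩ := eLpNormEssSup_lt_top_iff_isBoundedUnder.1 h
  refine ⟨C, (eventually_map.1 hC).mono fun ω hω => ?_⟩
  rw [← Real.norm_eq_abs, ← coe_nnnorm]
  exact_mod_cast hω

theorem MeasureTheory.Integrable.of_ae_abs_le {Ω : Type*} [MeasurableSpace Ω] {μ : Measure Ω}
    [IsFiniteMeasure μ] {g : Ω → ℝ} {C : ℝ} (hg : Measurable g) (h : ∀ᵐ ω ∂μ, |g ω| ≤ C) :
    Integrable g μ :=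
  .of_bound hg.aestronglyMeasurable C (by simpa only [Real.norm_eq_abs] using h)

theorem ConcaveOn.le_add_deriv_mul_sub {S : Set ℝ} {f : ℝ → ℝ} {x y : ℝ} (hf : ConcaveOn ℝ S f)
    (hx : x ∈ S) (hy : y ∈ S) (hd : DifferentiableAt ℝ f x) :
    f y ≤ f x + deriv f x * (y - x) := by
  rcases lt_trichotomy x y with hxy | rfl | hxy
  · have h := hf.slope_le_deriv hx hy hxy hd
    rw [slope_def_field, div_le_iff₀ (sub_pos.2 hxy)] at h
    linarith
  · simp
  · have h := hf.deriv_le_slope hy hx hxy hd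
    rw [slope_def_field, le_div_iff₀ (sub_pos.2 hxy)] at h
    linarith

theorem Monotone.abs_apply_le {U : ℝ → ℝ} (hU : Monotone U) {R x : ℝ} (hx : |x| ≤ R) :
    |U x| ≤ |U (-R)| + |U R| := by
  obtain ⟨hlo, hhi⟩ := abs_le.1 hx
  have := hU hlo
  have := hU hhi
  rw [abs_le]
  constructor <;> linarith [le_abs_self (U R), neg_abs_le (U (-R)), abs_nonneg (U R),
    abs_nonneg (U (-R))]

theorem abs_one_add_mul_le {γ x r M : ℝ} (hγ : |γ| ≤ r) (hx : |x| ≤ M) :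
    |1 + γ * x| ≤ 1 + r * M :=
  calc |1 + γ * x| ≤ |1| + |γ| * |x| := by rw [← abs_mul]; exact abs_add_le _ _
    _ ≤ 1 + r * M := by
      rw [abs_one]
      exact add_le_add_right (mul_le_mul hγ hx (abs_nonneg x) ((abs_nonneg γ).trans hγ)) 1

theorem abs_mul_add_mul_le {a b w v K : ℝ} (hw : 0 ≤ w) (hv : 0 ≤ v) (hwv : w + v = 1)
    (ha : |a| ≤ K) (hb : |b| ≤ K) : |a * w + b * v| ≤ K :=
  calc |a * w + b * v| ≤ |a| * w + |b| * v := by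
        simpa only [abs_mul, abs_of_nonneg hw, abs_of_nonneg hv] using abs_add_le (a * w) (b * v)
    _ ≤ K * w + K * v := by gcongr
    _ = K := by rw [← mul_add, hwv, mul_one]

theorem abs_sub_le_of_mem_Icc {sl su s S0 M : ℝ} (hs : s ∈ Icc sl su) (hl : |sl - S0| ≤ M)
    (hu : |su - S0| ≤ M) : |s - S0| ≤ M :=
  (abs_le_max_abs_abs (sub_le_sub_right hs.1 S0) (sub_le_sub_right hs.2 S0)).trans
    (max_le hl hu)

theorem convexWeights_of_mem_Icc {sl su s : ℝ} (hlt : sl < su) (hs : s ∈ Icc sl su) :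
    0 ≤ (s - sl) / (su - sl) ∧ 0 ≤ (su - s) / (su - sl) ∧
      (s - sl) / (su - sl) + (su - s) / (su - sl) = 1 := by
  refine ⟨div_nonneg (sub_nonneg.2 hs.1) (sub_pos.2 hlt).le,
    div_nonneg (sub_nonneg.2 hs.2) (sub_pos.2 hlt).le, ?_⟩
  rw [← add_div, sub_add_sub_cancel', div_self (sub_pos.2 hlt).ne']

structure IsUtility (U : ℝ → ℝ) : Prop where
  strictMono : StrictMono U
  concaveOn : ConcaveOn ℝ univ U
  differentiable : Differentiable ℝ U

namespace IsUtility

variable {U : ℝ → ℝ}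

theorem le_add_deriv_mul_sub (hU : IsUtility U) (x y : ℝ) : U y ≤ U x + deriv U x * (y - x) :=
  hU.concaveOn.le_add_deriv_mul_sub (mem_univ x) (mem_univ y) (hU.differentiable x)

theorem monotone (hU : IsUtility U) : Monotone U :=
  hU.strictMono.monotone

theorem deriv_nonneg (hU : IsUtility U) (x : ℝ) : 0 ≤ deriv U x :=
  hU.monotone.deriv_nonneg

theorem antitone_deriv (hU : IsUtility U) : Antitone (deriv U) := fun a b hab =>
  hU.concaveOn.antitoneOn_deriv (fun x _ => hU.differentiable x) (mem_univ a) (mem_univ b) hab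

theorem abs_deriv_mul_le (hU : IsUtility U) {R M x y : ℝ} (hx : |x| ≤ R) (hy : |y| ≤ M) :
    |deriv U x * y| ≤ deriv U (-R) * M := by
  rw [abs_mul, abs_of_nonneg (hU.deriv_nonneg x)]
  exact mul_le_mul (hU.antitone_deriv (abs_le.1 hx).1) hy (abs_nonneg y) (hU.deriv_nonneg _)

end IsUtility

section Pointwise

variable {U : ℝ → ℝ} {S0 sl su s γ : ℝ}

def liquidationWealth (S0 sl su γ : ℝ) : ℝ :=
  1 + max γ 0 * (sl - S0) - max (-γ) 0 * (su - S0)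

def relaxedIntegrand (U : ℝ → ℝ) (S0 sl su s γ : ℝ) : ℝ :=
  U (1 + γ * (su - S0)) * ((s - sl) / (su - sl)) +
    U (1 + γ * (sl - S0)) * ((su - s) / (su - sl))

def relaxedIntegrandDeriv (U : ℝ → ℝ) (S0 sl su s γ : ℝ) : ℝ :=
  deriv U (1 + γ * (su - S0)) * (su - S0) * ((s - sl) / (su - sl)) +
    deriv U (1 + γ * (sl - S0)) * (sl - S0) * ((su - s) / (su - sl))

-- Condition (i) at a single state: a long position is valued at the bid, a short one at the ask.
def IsLiquidationPrice (γ sl su s : ℝ) : Prop :=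
  (0 < γ → s = sl) ∧ (γ < 0 → s = su)

theorem liquidationWealth_of_nonneg (hγ : 0 ≤ γ) :
    liquidationWealth S0 sl su γ = 1 + γ * (sl - S0) := by
  simp only [liquidationWealth, max_eq_left hγ, max_eq_right (neg_nonpos.2 hγ)]
  ring

theorem liquidationWealth_of_nonpos (hγ : γ ≤ 0) :
    liquidationWealth S0 sl su γ = 1 + γ * (su - S0) := by
  simp only [liquidationWealth, max_eq_right hγ, max_eq_left (neg_nonneg.2 hγ)]
  ring

theorem IsLiquidationPrice.liquidationWealth_eq (h : IsLiquidationPrice γ sl su s) :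
    liquidationWealth S0 sl su γ = 1 + γ * (s - S0) := by
  rcases lt_trichotomy γ 0 with hγ | rfl | hγ
  · rw [liquidationWealth_of_nonpos hγ.le, h.2 hγ]
  · simp [liquidationWealth]
  · rw [liquidationWealth_of_nonneg hγ.le, h.1 hγ]

theorem abs_liquidationWealth_le {M r : ℝ} (hl : |sl - S0| ≤ M) (hu : |su - S0| ≤ M)
    (hγ : |γ| ≤ r) : |liquidationWealth S0 sl su γ| ≤ 1 + r * M := by
  rcases le_total 0 γ with h | h
  · rw [liquidationWealth_of_nonneg h]
    exact abs_one_add_mul_le hγ hl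
  · rw [liquidationWealth_of_nonpos h]
    exact abs_one_add_mul_le hγ hu

theorem relaxedIntegrand_sub_bid (hlt : sl < su) :
    relaxedIntegrand U S0 sl su s γ - U (1 + γ * (sl - S0)) =
      (s - sl) / (su - sl) * (U (1 + γ * (su - S0)) - U (1 + γ * (sl - S0))) := by
  have := (sub_pos.2 hlt).ne'
  unfold relaxedIntegrand
  field_simp
  ring

theorem relaxedIntegrand_sub_ask (hlt : sl < su) :
    relaxedIntegrand U S0 sl su s γ - U (1 + γ * (su - S0)) =
      (su - s) / (su - sl) * (U (1 + γ * (sl - S0)) - U (1 + γ * (su - S0))) := by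
  have := (sub_pos.2 hlt).ne'
  unfold relaxedIntegrand
  field_simp
  ring

theorem apply_liquidationWealth_le_relaxedIntegrand (hU : Monotone U) (hlt : sl < su)
    (hs : s ∈ Icc sl su) :
    U (liquidationWealth S0 sl su γ) ≤ relaxedIntegrand U S0 sl su s γ := by
  obtain ⟨hw, hv, -⟩ := convexWeights_of_mem_Icc hlt hs
  rcases le_total 0 γ with hγ | hγ
  · rw [liquidationWealth_of_nonneg hγ, ← sub_nonneg, relaxedIntegrand_sub_bid hlt]
    exact mul_nonneg hw (sub_nonneg.2 (hU (by nlinarith)))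
  · rw [liquidationWealth_of_nonpos hγ, ← sub_nonneg, relaxedIntegrand_sub_ask hlt]
    exact mul_nonneg hv (sub_nonneg.2 (hU (by nlinarith)))

theorem relaxedIntegrand_le_apply_liquidationWealth_iff (hU : StrictMono U) (hlt : sl < su)
    (hs : s ∈ Icc sl su) :
    relaxedIntegrand U S0 sl su s γ ≤ U (liquidationWealth S0 sl su γ) ↔
      IsLiquidationPrice γ sl su s := by
  obtain ⟨hw, hv, hwv⟩ := convexWeights_of_mem_Icc hlt hs
  have hd := sub_pos.2 hlt
  rcases lt_trichotomy γ 0 with hγ | rfl | hγ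
  · have hU_lt : U (1 + γ * (su - S0)) < U (1 + γ * (sl - S0)) := hU (by nlinarith)
    rw [liquidationWealth_of_nonpos hγ.le, ← sub_nonpos, relaxedIntegrand_sub_ask hlt,
      (mul_nonneg hv (sub_pos.2 hU_lt).le).ge_iff_eq, eq_comm]
    simp [IsLiquidationPrice, hγ, hγ.not_gt, hd.ne', (sub_pos.2 hU_lt).ne', sub_eq_zero, eq_comm]
  · simp only [relaxedIntegrand, liquidationWealth, zero_mul, add_zero, ← mul_add, hwv]
    simp [IsLiquidationPrice]
  · have hU_lt : U (1 + γ * (sl - S0)) < U (1 + γ * (su - S0)) := hU (by nlinarith)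
    rw [liquidationWealth_of_nonneg hγ.le, ← sub_nonpos, relaxedIntegrand_sub_bid hlt,
      (mul_nonneg hw (sub_pos.2 hU_lt).le).ge_iff_eq, eq_comm]
    simp [IsLiquidationPrice, hγ, hγ.not_gt, hd.ne', (sub_pos.2 hU_lt).ne', sub_eq_zero]

theorem IsLiquidationPrice.relaxedIntegrandDeriv_eq (h : IsLiquidationPrice γ sl su s)
    (hlt : sl < su) :
    relaxedIntegrandDeriv U S0 sl su s γ = (s - S0) * deriv U (1 + γ * (s - S0)) := by
  have := (sub_pos.2 hlt).ne'
  rcases lt_trichotomy γ 0 with hγ | rfl | hγ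
  · rw [relaxedIntegrandDeriv, h.2 hγ]
    field_simp
    ring
  · simp only [relaxedIntegrandDeriv, zero_mul, add_zero]
    field_simp
    ring
  · rw [relaxedIntegrandDeriv, h.1 hγ]
    field_simp
    ring

theorem hasDerivAt_relaxedIntegrand (hU : Differentiable ℝ U) :
    HasDerivAt (relaxedIntegrand U S0 sl su s) (relaxedIntegrandDeriv U S0 sl su s γ) γ := by
  have hwealth : ∀ x, HasDerivAt (fun γ => U (1 + γ * (x - S0)))
      (deriv U (1 + γ * (x - S0)) * (x - S0)) γ := fun x =>
    (hU _).hasDerivAt.comp γ ((hasDerivAt_mul_const (x - S0)).const_add 1)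
  exact ((hwealth su).mul_const _).add ((hwealth sl).mul_const _)

theorem relaxedIntegrand_le_tangent (hU : ConcaveOn ℝ univ U) (hd : Differentiable ℝ U)
    (hlt : sl < su) (hs : s ∈ Icc sl su) (g : ℝ) :
    relaxedIntegrand U S0 sl su s γ ≤
      relaxedIntegrand U S0 sl su s g + (γ - g) * relaxedIntegrandDeriv U S0 sl su s g := by
  obtain ⟨hw, hv, -⟩ := convexWeights_of_mem_Icc hlt hs
  have hu := mul_le_mul_of_nonneg_right
    (hU.le_add_deriv_mul_sub (mem_univ _) (mem_univ (1 + γ * (su - S0))) (hd (1 + g * (su - S0))))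
    hw
  have hl := mul_le_mul_of_nonneg_right
    (hU.le_add_deriv_mul_sub (mem_univ _) (mem_univ (1 + γ * (sl - S0))) (hd (1 + g * (sl - S0))))
    hv
  unfold relaxedIntegrand relaxedIntegrandDeriv
  linarith

theorem abs_relaxedIntegrand_le (hU : Monotone U) (hlt : sl < su) (hs : s ∈ Icc sl su)
    {M r : ℝ} (hl : |sl - S0| ≤ M) (hu : |su - S0| ≤ M) (hγ : |γ| ≤ r) :
    |relaxedIntegrand U S0 sl su s γ| ≤ |U (-(1 + r * M))| + |U (1 + r * M)| :=
  let ⟨hw, hv, hwv⟩ := convexWeights_of_mem_Icc hlt hs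
  abs_mul_add_mul_le hw hv hwv (hU.abs_apply_le (abs_one_add_mul_le hγ hu))
    (hU.abs_apply_le (abs_one_add_mul_le hγ hl))

theorem abs_relaxedIntegrandDeriv_le (hU : IsUtility U) (hlt : sl < su) (hs : s ∈ Icc sl su)
    {M r : ℝ} (hl : |sl - S0| ≤ M) (hu : |su - S0| ≤ M) (hγ : |γ| ≤ r) :
    |relaxedIntegrandDeriv U S0 sl su s γ| ≤ deriv U (-(1 + r * M)) * M :=
  let ⟨hw, hv, hwv⟩ := convexWeights_of_mem_Icc hlt hs
  abs_mul_add_mul_le hw hv hwv (hU.abs_deriv_mul_le (abs_one_add_mul_le hγ hu) hu)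
    (hU.abs_deriv_mul_le (abs_one_add_mul_le hγ hl) hl)

end Pointwise

section Integral

variable {Ω : Type*} [MeasurableSpace Ω] {μ : Measure Ω} {U : ℝ → ℝ} {S0 : ℝ} {Sl Su f : Ω → ℝ}

structure BidAskSpread (μ : Measure Ω) (S0 : ℝ) (Sl Su : Ω → ℝ) : Prop where
  measurable_bid : Measurable Sl
  measurable_ask : Measurable Su
  ae_bid_lt_ask : ∀ᵐ ω ∂μ, Sl ω < Su ω
  exists_bound : ∃ M, ∀ᵐ ω ∂μ, |Sl ω - S0| ≤ M ∧ |Su ω - S0| ≤ M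

def orderInterval (μ : Measure Ω) (Sl Su : Ω → ℝ) : Set (Ω → ℝ) :=
  {f | Measurable f ∧ ∀ᵐ ω ∂μ, Sl ω ≤ f ω ∧ f ω ≤ Su ω}

def relaxedValue (μ : Measure Ω) (U : ℝ → ℝ) (S0 : ℝ) (Sl Su f : Ω → ℝ) (γ : ℝ) : ℝ :=
  ∫ ω, relaxedIntegrand U S0 (Sl ω) (Su ω) (f ω) γ ∂μ

theorem BidAskSpread.of_memLp (hSl : Measurable Sl) (hSu : Measurable Su)
    (hSl_bdd : MemLp Sl ∞ μ) (hSu_bdd : MemLp Su ∞ μ) (hlt : ∀ᵐ ω ∂μ, Sl ω < Su ω) :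
    BidAskSpread μ S0 Sl Su := by
  obtain ⟨Cl, hCl⟩ := hSl_bdd.exists_ae_abs_le
  obtain ⟨Cu, hCu⟩ := hSu_bdd.exists_ae_abs_le
  refine ⟨hSl, hSu, hlt, Cl + Cu + |S0|, ?_⟩
  filter_upwards [hCl, hCu] with ω hl hu
  have := abs_sub (Sl ω) S0
  have := abs_sub (Su ω) S0
  constructor <;> linarith [abs_nonneg (Sl ω), abs_nonneg (Su ω)]

theorem BidAskSpread.bid_mem_orderInterval (hm : BidAskSpread μ S0 Sl Su) :
    Sl ∈ orderInterval μ Sl Su :=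
  ⟨hm.measurable_bid, hm.ae_bid_lt_ask.mono fun _ h => ⟨le_rfl, h.le⟩⟩

theorem BidAskSpread.ask_mem_orderInterval (hm : BidAskSpread μ S0 Sl Su) :
    Su ∈ orderInterval μ Sl Su :=
  ⟨hm.measurable_ask, hm.ae_bid_lt_ask.mono fun _ h => ⟨h.le, le_rfl⟩⟩

theorem integral_relaxedIntegrandDeriv_of_ae_isLiquidationPrice
    (hm : BidAskSpread μ S0 Sl Su) {g : ℝ}
    (h : ∀ᵐ ω ∂μ, IsLiquidationPrice g (Sl ω) (Su ω) (f ω)) :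
    ∫ ω, relaxedIntegrandDeriv U S0 (Sl ω) (Su ω) (f ω) g ∂μ =
      ∫ ω, (f ω - S0) * deriv U (1 + g * (f ω - S0)) ∂μ :=
  integral_congr_ae <| by
    filter_upwards [h, hm.ae_bid_lt_ask] with ω h hlt
    exact h.relaxedIntegrandDeriv_eq hlt

variable [IsFiniteMeasure μ]

theorem integrable_relaxedIntegrand (hm : BidAskSpread μ S0 Sl Su) (hU : Monotone U)
    (hf : f ∈ orderInterval μ Sl Su) (γ : ℝ) :
    Integrable (fun ω => relaxedIntegrand U S0 (Sl ω) (Su ω) (f ω) γ) μ := by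
  obtain ⟨M, hM⟩ := hm.exists_bound
  have := hU.measurable
  have := hm.measurable_bid
  have := hm.measurable_ask
  have := hf.1
  apply Integrable.of_ae_abs_le (by unfold relaxedIntegrand; fun_prop)
  filter_upwards [hm.ae_bid_lt_ask, hf.2, hM] with ω hlt hs hb
  exact abs_relaxedIntegrand_le hU hlt hs hb.1 hb.2 le_rfl

theorem integrable_relaxedIntegrandDeriv (hm : BidAskSpread μ S0 Sl Su) (hU : IsUtility U)
    (hf : f ∈ orderInterval μ Sl Su) (γ : ℝ) :
    Integrable (fun ω => relaxedIntegrandDeriv U S0 (Sl ω) (Su ω) (f ω) γ) μ := by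
  obtain ⟨M, hM⟩ := hm.exists_bound
  have := measurable_deriv U
  have := hm.measurable_bid
  have := hm.measurable_ask
  have := hf.1
  apply Integrable.of_ae_abs_le (by unfold relaxedIntegrandDeriv; fun_prop)
  filter_upwards [hm.ae_bid_lt_ask, hf.2, hM] with ω hlt hs hb
  exact abs_relaxedIntegrandDeriv_le hU hlt hs hb.1 hb.2 le_rfl

theorem integrable_apply_liquidationWealth (hm : BidAskSpread μ S0 Sl Su) (hU : Monotone U)
    (γ : ℝ) : Integrable (fun ω => U (liquidationWealth S0 (Sl ω) (Su ω) γ)) μ := by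
  obtain ⟨M, hM⟩ := hm.exists_bound
  have := hU.measurable
  have := hm.measurable_bid
  have := hm.measurable_ask
  apply Integrable.of_ae_abs_le (by unfold liquidationWealth; fun_prop)
  filter_upwards [hM] with ω hb
  exact hU.abs_apply_le (abs_liquidationWealth_le hb.1 hb.2 le_rfl)

theorem integrable_apply_frictionlessWealth (hm : BidAskSpread μ S0 Sl Su) (hU : Monotone U)
    (hf : f ∈ orderInterval μ Sl Su) (γ : ℝ) :
    Integrable (fun ω => U (1 + γ * (f ω - S0))) μ := by
  obtain ⟨M, hM⟩ := hm.exists_bound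
  have := hU.measurable
  have := hf.1
  apply Integrable.of_ae_abs_le (by fun_prop)
  filter_upwards [hf.2, hM] with ω hs hb
  exact hU.abs_apply_le (abs_one_add_mul_le le_rfl (abs_sub_le_of_mem_Icc hs hb.1 hb.2))

theorem integrable_frictionlessDeriv (hm : BidAskSpread μ S0 Sl Su) (hU : IsUtility U)
    (hf : f ∈ orderInterval μ Sl Su) (γ : ℝ) :
    Integrable (fun ω => (f ω - S0) * deriv U (1 + γ * (f ω - S0))) μ := by
  obtain ⟨M, hM⟩ := hm.exists_bound
  have := measurable_deriv U
  have := hf.1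
  apply Integrable.of_ae_abs_le (by fun_prop)
  filter_upwards [hf.2, hM] with ω hs hb
  have hx := abs_sub_le_of_mem_Icc hs hb.1 hb.2
  rw [mul_comm]
  exact hU.abs_deriv_mul_le (abs_one_add_mul_le le_rfl hx) hx

theorem hasDerivAt_relaxedValue (hm : BidAskSpread μ S0 Sl Su) (hU : IsUtility U)
    (hf : f ∈ orderInterval μ Sl Su) (g : ℝ) :
    HasDerivAt (relaxedValue μ U S0 Sl Su f)
      (∫ ω, relaxedIntegrandDeriv U S0 (Sl ω) (Su ω) (f ω) g ∂μ) g := by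
  obtain ⟨M, hM⟩ := hm.exists_bound
  refine (hasDerivAt_integral_of_dominated_loc_of_deriv_le (Metric.ball_mem_nhds g one_pos)
    (F' := fun γ ω => relaxedIntegrandDeriv U S0 (Sl ω) (Su ω) (f ω) γ)
    (bound := fun _ => deriv U (-(1 + (|g| + 1) * M)) * M)
    (.of_forall fun γ =>
      (integrable_relaxedIntegrand hm hU.monotone hf γ).aestronglyMeasurable)
    (integrable_relaxedIntegrand hm hU.monotone hf g)
    (integrable_relaxedIntegrandDeriv hm hU hf g).aestronglyMeasurable ?_ (integrable_const _)
    (.of_forall fun ω γ _ => hasDerivAt_relaxedIntegrand hU.differentiable)).2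
  filter_upwards [hm.ae_bid_lt_ask, hf.2, hM] with ω hlt hs hb γ hγ
  have hγg : |γ| ≤ |g| + 1 := by
    rw [Metric.mem_ball, Real.dist_eq] at hγ
    linarith [abs_sub_abs_le_abs_sub γ g]
  exact abs_relaxedIntegrandDeriv_le hU hlt hs hb.1 hb.2 hγg

theorem relaxedValue_le_tangent (hm : BidAskSpread μ S0 Sl Su) (hU : IsUtility U)
    (hf : f ∈ orderInterval μ Sl Su) (g γ : ℝ) :
    relaxedValue μ U S0 Sl Su f γ ≤ relaxedValue μ U S0 Sl Su f g +
      (γ - g) * ∫ ω, relaxedIntegrandDeriv U S0 (Sl ω) (Su ω) (f ω) g ∂μ := by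
  have hFg := integrable_relaxedIntegrand hm hU.monotone hf g
  have hG := (integrable_relaxedIntegrandDeriv hm hU hf g).const_mul (γ - g)
  rw [relaxedValue, relaxedValue, ← integral_const_mul, ← integral_add hFg hG]
  refine integral_mono_ae (integrable_relaxedIntegrand hm hU.monotone hf γ)
    (hFg.add hG) ?_
  filter_upwards [hm.ae_bid_lt_ask, hf.2] with ω hlt hs
  exact relaxedIntegrand_le_tangent hU.concaveOn hU.differentiable hlt hs g

theorem integral_frictionless_le_tangent (hm : BidAskSpread μ S0 Sl Su) (hU : IsUtility U)
    (hf : f ∈ orderInterval μ Sl Su) (g γ : ℝ) :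
    ∫ ω, U (1 + γ * (f ω - S0)) ∂μ ≤ ∫ ω, U (1 + g * (f ω - S0)) ∂μ +
      (γ - g) * ∫ ω, (f ω - S0) * deriv U (1 + g * (f ω - S0)) ∂μ := by
  have hFg := integrable_apply_frictionlessWealth hm hU.monotone hf g
  have hG := (integrable_frictionlessDeriv hm hU hf g).const_mul (γ - g)
  rw [← integral_const_mul, ← integral_add hFg hG]
  refine integral_mono (integrable_apply_frictionlessWealth hm hU.monotone hf γ)
    (hFg.add hG) fun ω => ?_
  have := hU.le_add_deriv_mul_sub (1 + g * (f ω - S0)) (1 + γ * (f ω - S0))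
  dsimp only
  linarith

theorem forall_relaxedValue_le_iff_integral_deriv_eq_zero (hm : BidAskSpread μ S0 Sl Su)
    (hU : IsUtility U) (hf : f ∈ orderInterval μ Sl Su) (g : ℝ) :
    (∀ γ, relaxedValue μ U S0 Sl Su f γ ≤ relaxedValue μ U S0 Sl Su f g) ↔
      ∫ ω, relaxedIntegrandDeriv U S0 (Sl ω) (Su ω) (f ω) g ∂μ = 0 :=
  ⟨fun h => IsLocalMax.hasDerivAt_eq_zero (.of_forall h) (hasDerivAt_relaxedValue hm hU hf g),
    fun h γ => by simpa [h] using relaxedValue_le_tangent hm hU hf g γ⟩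

theorem integral_liquidation_le_relaxedValue (hm : BidAskSpread μ S0 Sl Su) (hU : Monotone U)
    (hf : f ∈ orderInterval μ Sl Su) (γ : ℝ) :
    ∫ ω, U (liquidationWealth S0 (Sl ω) (Su ω) γ) ∂μ ≤ relaxedValue μ U S0 Sl Su f γ :=
  integral_mono_ae (integrable_apply_liquidationWealth hm hU γ)
    (integrable_relaxedIntegrand hm hU hf γ) <| by
      filter_upwards [hm.ae_bid_lt_ask, hf.2] with ω hlt hs
      exact apply_liquidationWealth_le_relaxedIntegrand hU hlt hs

theorem relaxedValue_le_integral_liquidation_iff (hm : BidAskSpread μ S0 Sl Su)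
    (hU : StrictMono U) (hf : f ∈ orderInterval μ Sl Su) (γ : ℝ) :
    relaxedValue μ U S0 Sl Su f γ ≤ ∫ ω, U (liquidationWealth S0 (Sl ω) (Su ω) γ) ∂μ ↔
      ∀ᵐ ω ∂μ, IsLiquidationPrice γ (Sl ω) (Su ω) (f ω) := by
  rw [(integral_liquidation_le_relaxedValue hm hU.monotone hf γ).ge_iff_eq, relaxedValue,
    integral_eq_iff_of_ae_le (integrable_apply_liquidationWealth hm hU.monotone γ)
      (integrable_relaxedIntegrand hm hU.monotone hf γ) (by
        filter_upwards [hm.ae_bid_lt_ask, hf.2] with ω hlt hs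
        exact apply_liquidationWealth_le_relaxedIntegrand hU.monotone hlt hs)]
  refine eventually_congr ?_
  filter_upwards [hm.ae_bid_lt_ask, hf.2] with ω hlt hs
  rw [← relaxedIntegrand_le_apply_liquidationWealth_iff hU hlt hs]
  exact ⟨Eq.ge, (apply_liquidationWealth_le_relaxedIntegrand hU.monotone hlt hs).antisymm⟩

theorem exists_relaxedValue_le_integral_liquidation (hm : BidAskSpread μ S0 Sl Su)
    (hU : StrictMono U) (γ : ℝ) :
    ∃ f ∈ orderInterval μ Sl Su,
      relaxedValue μ U S0 Sl Su f γ ≤ ∫ ω, U (liquidationWealth S0 (Sl ω) (Su ω) γ) ∂μ := by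
  rcases le_total 0 γ with hγ | hγ
  · refine ⟨Sl, hm.bid_mem_orderInterval,
      (relaxedValue_le_integral_liquidation_iff hm hU hm.bid_mem_orderInterval γ).2 ?_⟩
    exact .of_forall fun ω => ⟨fun _ => rfl, fun h => absurd hγ h.not_ge⟩
  · refine ⟨Su, hm.ask_mem_orderInterval,
      (relaxedValue_le_integral_liquidation_iff hm hU hm.ask_mem_orderInterval γ).2 ?_⟩
    exact .of_forall fun ω => ⟨fun h => absurd hγ h.not_ge, fun _ => rfl⟩

theorem forall_relaxedValue_le_iff_ae_isLiquidationPrice (hm : BidAskSpread μ S0 Sl Su)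
    (hU : StrictMono U) (hf : f ∈ orderInterval μ Sl Su) (γ : ℝ) :
    (∀ f' ∈ orderInterval μ Sl Su,
        relaxedValue μ U S0 Sl Su f γ ≤ relaxedValue μ U S0 Sl Su f' γ) ↔
      ∀ᵐ ω ∂μ, IsLiquidationPrice γ (Sl ω) (Su ω) (f ω) := by
  rw [← relaxedValue_le_integral_liquidation_iff hm hU hf]
  refine ⟨fun h => ?_, fun h f' hf' => h.trans (integral_liquidation_le_relaxedValue hm
    hU.monotone hf' γ)⟩
  obtain ⟨f', hf', hle⟩ := exists_relaxedValue_le_integral_liquidation hm hU γ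
  exact (h f' hf').trans hle

theorem isSaddlePoint_relaxedValue_iff (hm : BidAskSpread μ S0 Sl Su) (hU : IsUtility U)
    (hf : f ∈ orderInterval μ Sl Su) (g : ℝ) :
    ((∀ γ, relaxedValue μ U S0 Sl Su f γ ≤ relaxedValue μ U S0 Sl Su f g) ∧
        ∀ f' ∈ orderInterval μ Sl Su,
          relaxedValue μ U S0 Sl Su f g ≤ relaxedValue μ U S0 Sl Su f' g) ↔
      (∀ᵐ ω ∂μ, IsLiquidationPrice g (Sl ω) (Su ω) (f ω)) ∧
        ∫ ω, (f ω - S0) * deriv U (1 + g * (f ω - S0)) ∂μ = 0 := by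
  rw [forall_relaxedValue_le_iff_integral_deriv_eq_zero hm hU hf,
    forall_relaxedValue_le_iff_ae_isLiquidationPrice hm hU.strictMono hf, and_comm]
  exact and_congr_right fun h => by
    rw [integral_relaxedIntegrandDeriv_of_ae_isLiquidationPrice hm h]

theorem iSup_frictionless_eq_of_iSup_relaxedValue_eq (hm : BidAskSpread μ S0 Sl Su)
    (hU : IsUtility U) {g : ℝ}
    (hg : ∀ γ, ∫ ω, U (liquidationWealth S0 (Sl ω) (Su ω) γ) ∂μ ≤
      ∫ ω, U (liquidationWealth S0 (Sl ω) (Su ω) g) ∂μ)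
    (hf : f ∈ orderInterval μ Sl Su)
    (hsup : ⨆ γ, (relaxedValue μ U S0 Sl Su f γ : EReal) =
      ⨆ γ, ((∫ ω, U (liquidationWealth S0 (Sl ω) (Su ω) γ) ∂μ : ℝ) : EReal)) :
    ⨆ γ, ((∫ ω, U (1 + γ * (f ω - S0)) ∂μ : ℝ) : EReal) =
      ⨆ γ, ((∫ ω, U (liquidationWealth S0 (Sl ω) (Su ω) γ) ∂μ : ℝ) : EReal) := by
  rw [iSup_eq_of_forall_le fun γ => EReal.coe_le_coe_iff.2 (hg γ)] at hsup ⊢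
  have hbound : ∀ γ, relaxedValue μ U S0 Sl Su f γ ≤
      ∫ ω, U (liquidationWealth S0 (Sl ω) (Su ω) g) ∂μ := fun γ =>
    EReal.coe_le_coe_iff.1 (hsup ▸ le_iSup (fun γ => (relaxedValue μ U S0 Sl Su f γ : EReal)) γ)
  have hliq := (relaxedValue_le_integral_liquidation_iff hm hU.strictMono hf g).1 (hbound g)
  have hmax : ∀ γ, relaxedValue μ U S0 Sl Su f γ ≤ relaxedValue μ U S0 Sl Su f g := fun γ =>
    (hbound γ).trans (integral_liquidation_le_relaxedValue hm hU.monotone hf g)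
  have hfoc := ((isSaddlePoint_relaxedValue_iff hm hU hf g).1
    ⟨hmax, (forall_relaxedValue_le_iff_ae_isLiquidationPrice hm hU.strictMono hf g).2 hliq⟩).2
  have hwealth : ∫ ω, U (1 + g * (f ω - S0)) ∂μ =
      ∫ ω, U (liquidationWealth S0 (Sl ω) (Su ω) g) ∂μ :=
    integral_congr_ae (hliq.mono fun _ h => (congrArg U h.liquidationWealth_eq).symm)
  rw [← hwealth]
  refine iSup_eq_of_forall_le fun γ => EReal.coe_le_coe_iff.2 ?_
  simpa [hfoc] using integral_frictionless_le_tangent hm hU hf g γ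

end Integral

instance : IsFiniteMeasure P15 := by
  unfold P15
  infer_instance

theorem statement15_general
    (S0 : ℝ) (Sl Su : ℝ → ℝ)
    (hSl_meas : Measurable Sl) (hSu_meas : Measurable Su)
    (hSl_bdd : MemLp Sl ∞ P15) (hSu_bdd : MemLp Su ∞ P15)
    (α : ℝ) (hα : 0 < α) (hgap : ∀ᵐ ω ∂P15, α ≤ Su ω - Sl ω)
    (U : ℝ → ℝ) (hU_mono : StrictMono U) (hU_conc : ConcaveOn ℝ Set.univ U)
    (hU_diff : Differentiable ℝ U)
    (hopt : ∃ g : ℝ, ∀ γ0 : ℝ,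
      ∫ ω, U (X1ex3 S0 Sl Su γ0 ω) ∂P15 ≤ ∫ ω, U (X1ex3 S0 Sl Su g ω) ∂P15) :
    (∀ Sstar ∈ I15 Sl Su, ∀ gstar : ℝ,
      ((∀ γ0 : ℝ, PsiHat3 S0 Sl Su U Sstar γ0 ≤ PsiHat3 S0 Sl Su U Sstar gstar) ∧
        (∀ f ∈ I15 Sl Su, PsiHat3 S0 Sl Su U Sstar gstar ≤ PsiHat3 S0 Sl Su U f gstar))
      ↔ ((∀ᵐ ω ∂P15, (0 < gstar → Sstar ω = Sl ω) ∧ (gstar < 0 → Sstar ω = Su ω)) ∧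
          ∫ ω, (Sstar ω - S0) * deriv U (1 + gstar * (Sstar ω - S0)) ∂P15 = 0)) ∧
    (∀ Sstar ∈ I15 Sl Su,
      (⨆ γ0 : ℝ, ((PsiHat3 S0 Sl Su U Sstar γ0 : ℝ) : EReal)) =
          (⨆ γ0 : ℝ, ((∫ ω, U (X1ex3 S0 Sl Su γ0 ω) ∂P15 : ℝ) : EReal)) →
      (⨆ γ0 : ℝ, ((∫ ω, U (1 + γ0 * (Sstar ω - S0)) ∂P15 : ℝ) : EReal)) =
        ⨆ γ0 : ℝ, ((∫ ω, U (X1ex3 S0 Sl Su γ0 ω) ∂P15 : ℝ) : EReal)) := by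
  have hm : BidAskSpread P15 S0 Sl Su :=
    .of_memLp hSl_meas hSu_meas hSl_bdd hSu_bdd (hgap.mono fun _ h => by linarith)
  have hU : IsUtility U := ⟨hU_mono, hU_conc, hU_diff⟩
  obtain ⟨g, hg⟩ := hopt
  -- `PsiHat3`, `I15` and `X1ex3` are `relaxedValue P15`, `orderInterval P15` and
  -- `liquidationWealth` unfolded, so the general statements apply verbatim.
  exact ⟨fun Sstar hS gstar => isSaddlePoint_relaxedValue_iff hm hU hS gstar,
    fun Sstar hS => iSup_frictionless_eq_of_iSup_relaxedValue_eq hm hU hg hS⟩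

/-- **Example 3 (saddle points).** If moreover `U` is strictly increasing and differentiable
and the problem `maximize E[U(X_1(γ))]` has an optimal solution, then `(S⋆, γ⋆)` is a saddle
point of `Ψ̂` iff (i) `S⋆_1 = S̲_1` a.s. on `{γ⋆_0 > 0}` and `S⋆_1 = S̄_1` a.s. on
`{γ⋆_0 < 0}`, and (ii) `E[(S⋆_1 − S_0) U′(1 + γ⋆_0 (S⋆_1 − S_0))] = 0`. Consequently every
generalized shadow price is a shadow price. -/
theorem statement15
    (S0 : ℝ) (Sl Su : ℝ → ℝ)
    (hSl_meas : Measurable Sl) (hSu_meas : Measurable Su)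
    (hSl_bdd : MemLp Sl ∞ P15) (hSu_bdd : MemLp Su ∞ P15)
    (hS_pos : ∀ᵐ ω ∂P15, 0 < Sl ω)
    (α : ℝ) (hα : 0 < α) (hgap : ∀ᵐ ω ∂P15, α ≤ Su ω - Sl ω)
    (U : ℝ → ℝ) (hU_mono : StrictMono U) (hU_conc : ConcaveOn ℝ Set.univ U)
    (hU_diff : Differentiable ℝ U)
    (hopt : ∃ g : ℝ, ∀ γ0 : ℝ,
      ∫ ω, U (X1ex3 S0 Sl Su γ0 ω) ∂P15 ≤ ∫ ω, U (X1ex3 S0 Sl Su g ω) ∂P15) :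
    (∀ Sstar ∈ I15 Sl Su, ∀ gstar : ℝ,
      ((∀ γ0 : ℝ, PsiHat3 S0 Sl Su U Sstar γ0 ≤ PsiHat3 S0 Sl Su U Sstar gstar) ∧
        (∀ f ∈ I15 Sl Su, PsiHat3 S0 Sl Su U Sstar gstar ≤ PsiHat3 S0 Sl Su U f gstar))
      ↔ ((∀ᵐ ω ∂P15, (0 < gstar → Sstar ω = Sl ω) ∧ (gstar < 0 → Sstar ω = Su ω)) ∧
          ∫ ω, (Sstar ω - S0) * deriv U (1 + gstar * (Sstar ω - S0)) ∂P15 = 0)) ∧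
    (∀ Sstar ∈ I15 Sl Su,
      (⨆ γ0 : ℝ, ((PsiHat3 S0 Sl Su U Sstar γ0 : ℝ) : EReal)) =
          (⨆ γ0 : ℝ, ((∫ ω, U (X1ex3 S0 Sl Su γ0 ω) ∂P15 : ℝ) : EReal)) →
      (⨆ γ0 : ℝ, ((∫ ω, U (1 + γ0 * (Sstar ω - S0)) ∂P15 : ℝ) : EReal)) =
        ⨆ γ0 : ℝ, ((∫ ω, U (X1ex3 S0 Sl Su γ0 ω) ∂P15 : ℝ) : EReal)) :=
  statement15_general S0 Sl Su hSl_meas hSu_meas hSl_bdd hSu_bdd α hα hgap U hU_mono hU_conc hU_diff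
    hopt
end
end
end
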